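/- Let μ be a probability measure on a measurable space E, and let X^1, ..., X^{T-1} be samples such that, conditional on T = t, exactly N−1 lie in B and t−N lie in B^c with the conditional i.i.d. structure of the alive sampler for target μ (with q = μ(B) ∈ (0,1), N ≥ 3, T negative binomial(N, q)). Let η(F) := (1/((T-1)(T-2))) Σ_{i≠j} F(X^i, X^j) denote the U-statistic for bounded measurable F : E^2 → ℝ. Then E[η(F)] = μ⊗μ(F) = ∫∫ F(x,y) μ(dx) μ(dy). -/

import Mathlib

/-!
Decompose the expectation along the value `t + 1` of the stopping time `T`. On `{T = t + 1}`
each ordered pair `i ≠ j < t` contributes `E[F(X i, X j); T = t + 1]`. Sorting this event by the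
number `m ∈ {0, 1, 2}` of the pair's samples lying in `B`, independence factors it as
`∫_{pairCount = m} F d(μ⊗μ)` times the probability that the other `t - 2` early draws contain
`N - 1 - m` hits and draw `t` is a hit, a negative binomial mass. The `t (t - 1)` pairs cancel the
normalisation of the U-statistic, the negative binomial masses sum to `1` over `t`, and what is
left is `∑ m, ∫_{pairCount = m} F d(μ⊗μ) = ∫ F d(μ⊗μ)`.
-/

open MeasureTheory ProbabilityTheory Finset
open scoped Classical BigOperators

/-- Probability that the `(k + 1)`-st success of independent Bernoulli(`q`) trials happens at
trial `n + 1`. -/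
noncomputable def negBinomialMass (q : ℝ) (k n : ℕ) : ℝ :=
  n.choose k * q ^ (k + 1) * (1 - q) ^ (n - k)

theorem hasSum_negBinomialMass {q : ℝ} (hq : |1 - q| < 1) (k : ℕ) :
    HasSum (negBinomialMass q k) 1 := by
  have hq0 : q ≠ 0 := by rintro rfl; simp at hq
  have hgeom := (hasSum_choose_mul_geometric_of_norm_lt_one k (r := 1 - q) hq).mul_right
    (q ^ (k + 1))
  rw [sub_sub_cancel, one_div, inv_mul_cancel₀ (pow_ne_zero _ hq0)] at hgeom
  rw [← hasSum_nat_add_iff' k, sum_eq_zero fun n hn => by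
    simp [negBinomialMass, Nat.choose_eq_zero_of_lt (mem_range.mp hn)], sub_zero]
  refine hgeom.congr_fun fun n => ?_
  simp only [negBinomialMass, add_comm n k, Nat.add_sub_cancel_left]
  ring

theorem prod_ite_mem_eq_pow_mul_pow {ι M : Type*} [DecidableEq ι] [CommMonoid M]
    {U s : Finset ι} (hs : s ⊆ U) (a b : M) :
    ∏ l ∈ U, (if l ∈ s then a else b) = a ^ #s * b ^ (#U - #s) := by
  rw [prod_ite, prod_const, prod_const, filter_mem_eq_inter, inter_eq_right.mpr hs,
    filter_not, filter_mem_eq_inter, inter_eq_right.mpr hs, card_sdiff_of_subset hs]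

theorem ite_card_filter_eq_eq_sum_powersetCard {ι M : Type*} [DecidableEq ι] [AddCommMonoid M]
    (S : Finset ι) (p : ι → Prop) [DecidablePred p] (k : ℕ) (a : M) :
    (if #{l ∈ S | p l} = k then a else 0)
      = ∑ s ∈ S.powersetCard k, if ∀ l ∈ S, (p l ↔ l ∈ s) then a else 0 := by
  have hpattern : ∀ s ∈ S.powersetCard k, (∀ l ∈ S, (p l ↔ l ∈ s)) ↔ {l ∈ S | p l} = s := by
    intro s hs
    have hsS := (mem_powersetCard.mp hs).1
    constructor
    · intro h
      ext l
      simp only [mem_filter]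
      exact ⟨fun hl => (h l hl.1).mp hl.2, fun hl => ⟨hsS hl, (h l (hsS hl)).mpr hl⟩⟩
    · rintro rfl l hl
      simp [hl]
  rw [sum_congr rfl fun s hs => by rw [if_congr (hpattern s hs) rfl rfl], sum_ite_eq]
  simp [mem_powersetCard, filter_subset]

theorem card_filter_eq_card_filter_sdiff_pair_add {ι : Type*} [DecidableEq ι] {R : Finset ι}
    (p : ι → Prop) [DecidablePred p] {i j : ι} (hij : i ≠ j) (hi : i ∈ R) (hj : j ∈ R) :
    #{l ∈ R | p l}
      = #{l ∈ R \ {i, j} | p l} + ((if p i then 1 else 0) + (if p j then 1 else 0)) := by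
  simp only [card_filter]
  rw [← sum_sdiff (insert_subset hi (singleton_subset_iff.mpr hj)), sum_pair hij]

/-- `0` (that is, `sInf ∅`) when fewer than `N` of the draws ever land in `B`. -/
noncomputable def drawsUntil {E : Type*} (N : ℕ) (B : Set E) (x : ℕ → E) : ℕ :=
  sInf {n | N ≤ #{i ∈ range n | x i ∈ B}}

theorem drawsUntil_eq_succ_iff {E : Type*} {N : ℕ} (hN : 1 ≤ N) (B : Set E) (x : ℕ → E)
    (t : ℕ) : drawsUntil N B x = t + 1 ↔ #{i ∈ range t | x i ∈ B} = N - 1 ∧ x t ∈ B := by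
  simp only [drawsUntil, ← Nat.count_eq_card_filter_range]
  rw [Nat.sInf_upward_closed_eq_succ_iff fun a b hab ha => ha.trans (Nat.count_monotone _ hab)]
  simp only [Set.mem_ofPred_eq, Nat.count_succ]
  split_ifs with h <;> simp [h]; omega

theorem preimage_drawsUntil_succ {Ω E : Type*} {N : ℕ} (hN : 1 ≤ N) (B : Set E)
    (X : ℕ → Ω → E) (t : ℕ) :
    (fun ω => drawsUntil N B (X · ω)) ⁻¹' {t + 1}
      = {ω | #{l ∈ range t | X l ω ∈ B} = N - 1 ∧ X t ω ∈ B} :=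
  Set.ext fun ω => drawsUntil_eq_succ_iff hN B (X · ω) t

noncomputable def pairCount {E : Type*} (B : Set E) (z : E × E) : ℕ :=
  (if z.1 ∈ B then 1 else 0) + (if z.2 ∈ B then 1 else 0)

theorem pairCount_le_two {E : Type*} (B : Set E) (z : E × E) : pairCount B z ≤ 2 := by
  simp only [pairCount]
  split_ifs <;> simp

theorem indicator_card_filter_eq_and_mem_eq_sum {Ω E : Type*} (X : ℕ → Ω → E) (B : Set E)
    {S : Finset ℕ} {t : ℕ} (htS : t ∉ S) (k : ℕ) (g : Ω → ℝ) (ω : Ω) :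
    {ω | #{l ∈ S | X l ω ∈ B} = k ∧ X t ω ∈ B}.indicator g ω
      = ∑ s ∈ S.powersetCard k,
          (⋂ l ∈ insert t S, X l ⁻¹' if l ∈ insert t s then B else Bᶜ).indicator g ω := by
  have hpattern : ∀ s : Finset ℕ, (ω ∈ ⋂ l ∈ insert t S, X l ⁻¹' if l ∈ insert t s then B else Bᶜ) ↔
      (∀ l ∈ S, (X l ω ∈ B ↔ l ∈ s)) ∧ X t ω ∈ B := by
    intro s
    simp only [Set.mem_iInter, Set.mem_preimage, forall_mem_insert, mem_insert_self, if_true,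
      and_comm (a := X t ω ∈ B)]
    refine and_congr_left' (forall₂_congr fun l hl => ?_)
    have hlt : l ≠ t := by rintro rfl; exact htS hl
    by_cases h : l ∈ s <;> simp [h, hlt]
  simp only [Set.indicator_apply, Set.mem_ofPred_eq, ite_and,
    ite_card_filter_eq_eq_sum_powersetCard S (X · ω ∈ B) k]
  refine sum_congr rfl fun s _ => ?_
  rw [← ite_and]
  exact (if_congr (hpattern s) rfl rfl).symm

section UStatistic

variable {E : Type*}

noncomputable def uStatistic (F : E × E → ℝ) (x : ℕ → E) (n : ℕ) : ℝ :=
  𝔼 p ∈ (range n).offDiag, F (x p.1, x p.2)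

theorem one_div_mul_sum_sum_ite_eq_uStatistic (F : E × E → ℝ) (x : ℕ → E) (t : ℕ) :
    1 / (((t : ℝ) - 1) * ((t : ℝ) - 2)) *
        ∑ i ∈ range (t - 1), ∑ j ∈ range (t - 1), (if i ≠ j then F (x i, x j) else 0)
      = uStatistic F x (t - 1) := by
  rcases t with _ | n
  · simp [uStatistic]
  have hoff : (range n).offDiag = {p ∈ range n ×ˢ range n | p.1 ≠ p.2} := by
    ext
    simp [and_assoc]
  rw [Nat.add_sub_cancel, uStatistic, expect_eq_sum_div_card, hoff, sum_filter,
    sum_product' (range n) (range n) fun i j => if i ≠ j then F (x i, x j) else 0, ← hoff,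
    offDiag_card, card_range, Nat.cast_sub (Nat.le_mul_self n)]
  push_cast
  ring

theorem abs_uStatistic_le {F : E × E → ℝ} {C : ℝ} (hF : ∀ z, |F z| ≤ C) (x : ℕ → E) (n : ℕ) :
    |uStatistic F x n| ≤ C := by
  rcases ((range n).offDiag).eq_empty_or_nonempty with h | h
  · simpa [uStatistic, h] using (abs_nonneg _).trans (hF (x 0, x 0))
  · exact (abs_expect_le _ _).trans (expect_le h fun p _ => hF (x p.1, x p.2))

theorem integrable_uStatistic [MeasurableSpace E] {Ω : Type*} [MeasurableSpace Ω]
    {P : Measure Ω} [IsFiniteMeasure P] {F : E × E → ℝ} (hFm : Measurable F) {C : ℝ}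
    (hFb : ∀ z, |F z| ≤ C) {X : ℕ → Ω → E} (hXm : ∀ i, Measurable (X i)) {T : Ω → ℕ}
    (hT : Measurable T) : Integrable (fun ω => uStatistic F (X · ω) (T ω)) P := by
  have hjoint : Measurable fun p : Ω × ℕ => uStatistic F (X · p.1) p.2 := by
    refine measurable_from_prod_countable_left fun n => ?_
    simp only [uStatistic, expect_eq_sum_div_card]
    exact (Finset.measurable_sum _ fun p _ => hFm.comp ((hXm p.1).prodMk (hXm p.2))).div_const _
  have hcomp := hjoint.comp (f := fun ω => (ω, T ω)) (measurable_id.prodMk hT)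
  exact .of_bound hcomp.aestronglyMeasurable C
    (ae_of_all _ fun ω => (Real.norm_eq_abs _).trans_le (abs_uStatistic_le hFb _ _))

theorem hasSum_expect_offDiag_range {a : ℕ → ℝ} {A : ℝ} (ha : HasSum a A) :
    HasSum (fun t => 𝔼 _p ∈ (range t).offDiag, a (t - 2)) A := by
  rw [← hasSum_nat_add_iff' 2]
  have hne : ∀ t, ((range (t + 2)).offDiag).Nonempty := fun t => ⟨(0, 1), by simp⟩
  simpa [sum_range_succ, hne] using ha

end UStatistic

theorem hasSum_setIntegral_preimage_singleton {Ω ι : Type*} [MeasurableSpace Ω]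
    {P : Measure Ω} [Countable ι] [MeasurableSpace ι] [MeasurableSingletonClass ι] {T : Ω → ι}
    (hT : Measurable T) {g : ι → Ω → ℝ} (hg : Integrable (fun ω => g (T ω) ω) P) :
    HasSum (fun t => ∫ ω in T ⁻¹' {t}, g t ω ∂P) (∫ ω, g (T ω) ω ∂P) := by
  have h := hasSum_integral_iUnion (fun t => hT (measurableSet_singleton t))
    (pairwise_disjoint_fiber T) hg.integrableOn
  rw [← Set.preimage_iUnion, Set.iUnion_singleton_eq_range, Set.range_id', Set.preimage_univ,
    Measure.restrict_univ] at h
  refine h.congr_fun fun t => setIntegral_congr_fun (hT (measurableSet_singleton t)) ?_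
  intro ω hω
  rw [Set.mem_preimage, Set.mem_singleton_iff] at hω
  simp [hω]

theorem integral_expect {Ω ι : Type*} [MeasurableSpace Ω] {P : Measure Ω} (s : Finset ι)
    {f : ι → Ω → ℝ} (hf : ∀ i ∈ s, Integrable (f i) P) :
    ∫ ω, 𝔼 i ∈ s, f i ω ∂P = 𝔼 i ∈ s, ∫ ω, f i ω ∂P := by
  simp only [expect_eq_sum_div_card]
  rw [integral_div, integral_finsetSum _ hf]

section IID

variable {Ω E : Type*} [MeasurableSpace Ω] [MeasurableSpace E] {P : Measure Ω}
  [IsProbabilityMeasure P] {μ : Measure E} {X : ℕ → Ω → E}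

theorem map_pair_eq_prod (hXm : ∀ i, Measurable (X i)) (hindep : iIndepFun X P)
    (hlaw : ∀ i, P.map (X i) = μ) {i j : ℕ} (hij : i ≠ j) :
    P.map (fun ω => (X i ω, X j ω)) = μ.prod μ := by
  rw [(indepFun_iff_map_prod_eq_prod_map_map (hXm i).aemeasurable (hXm j).aemeasurable).mp
    (hindep.indepFun hij), hlaw, hlaw]

theorem integrable_comp_pair (hXm : ∀ i, Measurable (X i)) (hindep : iIndepFun X P)
    (hlaw : ∀ i, P.map (X i) = μ) {i j : ℕ} (hij : i ≠ j) {φ : E × E → ℝ}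
    (hφ : Integrable φ (μ.prod μ)) : Integrable (fun ω => φ (X i ω, X j ω)) P := by
  rw [← map_pair_eq_prod hXm hindep hlaw hij] at hφ
  exact hφ.comp_measurable ((hXm i).prodMk (hXm j))

theorem integral_indicator_iInter_preimage_comp_pair (hXm : ∀ i, Measurable (X i))
    (hindep : iIndepFun X P) (hlaw : ∀ i, P.map (X i) = μ) {i j : ℕ} (hij : i ≠ j)
    {U : Finset ℕ} (hi : i ∉ U) (hj : j ∉ U) {A : ℕ → Set E} (hA : ∀ l, MeasurableSet (A l))
    {φ : E × E → ℝ} (hφ : Measurable φ) :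
    ∫ ω, (⋂ l ∈ U, X l ⁻¹' A l).indicator (fun ω => φ (X i ω, X j ω)) ω ∂P
      = (∫ z, φ z ∂μ.prod μ) * ∏ l ∈ U, μ.real (A l) := by
  set box : (U → E) → ℝ := (Set.univ.pi fun l : U => A l).indicator fun _ => 1
  have hbox : Measurable box := measurable_const.indicator (MeasurableSet.univ_pi fun l => hA l)
  have hindep' : IndepFun (fun ω => φ (X i ω, X j ω)) (fun ω => box fun l : U => X l ω) P := by
    have hdisj : Disjoint ({i, j} : Finset ℕ) U := by simp [disjoint_left, hi, hj]
    refine (hindep.indepFun_finset _ _ hdisj hXm).comp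
      (φ := fun y => φ (y ⟨i, by simp⟩, y ⟨j, by simp⟩)) ?_ hbox
    exact hφ.comp ((measurable_pi_apply _).prodMk (measurable_pi_apply _))
  have hbox_eq : (fun ω => box fun l : U => X l ω) = (⋂ l ∈ U, X l ⁻¹' A l).indicator 1 := by
    ext ω
    simp only [box, Set.indicator_apply, Set.mem_iInter, Set.mem_preimage, Set.mem_univ_pi,
      Subtype.forall, Pi.one_apply]
  have hinter : (⋂ l ∈ U, X l ⁻¹' A l).indicator (fun ω => φ (X i ω, X j ω))
      = fun ω => φ (X i ω, X j ω) * box fun l : U => X l ω := by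
    ext ω
    simp only [box, Set.indicator_apply, Set.mem_iInter, Set.mem_preimage, Set.mem_univ_pi,
      Subtype.forall]
    split_ifs <;> simp
  have hmeas : MeasurableSet (⋂ l ∈ U, X l ⁻¹' A l) :=
    Finset.measurableSet_biInter U fun l _ => hXm l (hA l)
  rw [hinter, hindep'.integral_fun_mul_eq_mul_integral
      ((hφ.comp ((hXm i).prodMk (hXm j))).aestronglyMeasurable)
      (hbox.comp (measurable_pi_lambda _ fun l => hXm l)).aestronglyMeasurable,
    hbox_eq, integral_indicator_one hmeas, measureReal_def,
    hindep.measure_inter_preimage_eq_mul U fun l _ => hA l, ENNReal.toReal_prod,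
    ← map_pair_eq_prod hXm hindep hlaw hij,
    integral_map ((hXm i).prodMk (hXm j)).aemeasurable hφ.aestronglyMeasurable]
  congr 1
  refine prod_congr rfl fun l _ => ?_
  rw [← hlaw l, map_measureReal_apply (hXm l) (hA l), measureReal_def]

theorem measurableSet_card_filter_eq_and_mem (hXm : ∀ i, Measurable (X i)) {B : Set E}
    (hB : MeasurableSet B) (S : Finset ℕ) (k t : ℕ) :
    MeasurableSet {ω | #{l ∈ S | X l ω ∈ B} = k ∧ X t ω ∈ B} := by
  have hcount : Measurable fun ω => #{l ∈ S | X l ω ∈ B} := by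
    simp only [card_filter]
    exact Finset.measurable_sum _ fun l _ =>
      Measurable.ite (hXm l hB) measurable_const measurable_const
  exact (hcount (measurableSet_singleton k)).inter (hXm t hB)

theorem measurable_drawsUntil (hXm : ∀ i, Measurable (X i)) {N : ℕ} (hN : 1 ≤ N) {B : Set E}
    (hB : MeasurableSet B) : Measurable fun ω => drawsUntil N B (X · ω) := by
  have hsucc : ∀ t, MeasurableSet ((fun ω => drawsUntil N B (X · ω)) ⁻¹' {t + 1}) := fun t => by
    rw [preimage_drawsUntil_succ hN]
    exact measurableSet_card_filter_eq_and_mem hXm hB _ _ t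
  refine measurable_to_countable' fun t => ?_
  rcases t with _ | t
  · have hzero : (fun ω => drawsUntil N B (X · ω)) ⁻¹' {0}
        = (⋃ t, (fun ω => drawsUntil N B (X · ω)) ⁻¹' {t + 1})ᶜ := by
      ext ω
      simp only [Set.mem_preimage, Set.mem_singleton_iff, Set.mem_compl_iff, Set.mem_iUnion]
      constructor
      · rintro h ⟨t, ht⟩
        omega
      · intro h
        by_contra h0
        exact h ⟨_, (Nat.succ_pred_eq_of_ne_zero h0).symm⟩
    rw [hzero]
    exact (MeasurableSet.iUnion hsucc).compl
  · exact hsucc t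

theorem integral_indicator_card_filter_eq_and_mem_comp_pair [IsProbabilityMeasure μ]
    (hXm : ∀ i, Measurable (X i)) (hindep : iIndepFun X P) (hlaw : ∀ i, P.map (X i) = μ)
    {B : Set E} (hB : MeasurableSet B) {i j t : ℕ} (hij : i ≠ j) (hit : i ≠ t) (hjt : j ≠ t)
    {S : Finset ℕ} (hiS : i ∉ S) (hjS : j ∉ S) (htS : t ∉ S) (k : ℕ) {φ : E × E → ℝ}
    (hφ : Measurable φ) (hφi : Integrable φ (μ.prod μ)) :
    ∫ ω, {ω | #{l ∈ S | X l ω ∈ B} = k ∧ X t ω ∈ B}.indicator (fun ω => φ (X i ω, X j ω)) ω ∂P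
      = (∫ z, φ z ∂μ.prod μ) * negBinomialMass (μ.real B) k #S := by
  have hA : ∀ (s : Finset ℕ) (l : ℕ), MeasurableSet (if l ∈ insert t s then B else Bᶜ) :=
    fun s l => by
    split_ifs
    exacts [hB, hB.compl]
  have hweight : ∀ s ∈ S.powersetCard k,
      ∏ l ∈ insert t S, μ.real (if l ∈ insert t s then B else Bᶜ)
        = μ.real B ^ (k + 1) * (1 - μ.real B) ^ (#S - k) := by
    intro s hs
    obtain ⟨hsS, rfl⟩ := mem_powersetCard.mp hs
    simp only [apply_ite μ.real]
    rw [prod_ite_mem_eq_pow_mul_pow (insert_subset_insert t hsS), probReal_compl_eq_one_sub hB,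
      card_insert_of_notMem fun h => htS (hsS h), card_insert_of_notMem htS,
      Nat.add_sub_add_right]
  rw [integral_congr_ae (ae_of_all _ (indicator_card_filter_eq_and_mem_eq_sum X B htS k _)),
    integral_finsetSum _ fun s _ => (integrable_comp_pair hXm hindep hlaw hij hφi).indicator
      (measurableSet_biInter _ fun l _ => hXm l (hA s l))]
  rw [sum_congr rfl fun s hs => by
    rw [integral_indicator_iInter_preimage_comp_pair hXm hindep hlaw hij
      (by simp [hit, hiS]) (by simp [hjt, hjS]) (hA s) hφ, hweight s hs]]
  rw [sum_const, card_powersetCard, nsmul_eq_mul, negBinomialMass]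
  ring

theorem measurableSet_pairCount_eq {B : Set E} (hB : MeasurableSet B) (m : ℕ) :
    MeasurableSet {z | pairCount B z = m} := by
  have h : Measurable (pairCount B) :=
    (Measurable.ite (measurable_fst hB) measurable_const measurable_const).add
      (Measurable.ite (measurable_snd hB) measurable_const measurable_const)
  exact h (measurableSet_singleton m)

theorem sum_integral_indicator_pairCount_eq {ν : Measure (E × E)} {B : Set E}
    (hB : MeasurableSet B) {F : E × E → ℝ} (hFi : Integrable F ν) :
    ∑ m ∈ range 3, ∫ z, {z | pairCount B z = m}.indicator F z ∂ν = ∫ z, F z ∂ν := by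
  rw [← integral_finsetSum _ fun m _ => hFi.indicator (measurableSet_pairCount_eq hB m)]
  refine integral_congr_ae (ae_of_all _ fun z => ?_)
  simp [Set.indicator_apply, Nat.lt_succ_of_le (pairCount_le_two B z)]

theorem integral_indicator_card_filter_range_eq_and_mem_comp_pair [IsProbabilityMeasure μ]
    (hXm : ∀ i, Measurable (X i)) (hindep : iIndepFun X P) (hlaw : ∀ i, P.map (X i) = μ)
    {B : Set E} (hB : MeasurableSet B) {F : E × E → ℝ} (hFm : Measurable F)
    (hFi : Integrable F (μ.prod μ)) {K : ℕ} (hK : 2 ≤ K) {i j t : ℕ} (hij : i ≠ j)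
    (hi : i < t) (hj : j < t) :
    ∫ ω, {ω | #{l ∈ range t | X l ω ∈ B} = K ∧ X t ω ∈ B}.indicator
        (fun ω => F (X i ω, X j ω)) ω ∂P
      = ∑ m ∈ range 3, (∫ z, {z | pairCount B z = m}.indicator F z ∂μ.prod μ) *
          negBinomialMass (μ.real B) (K - m) (t - 2) := by
  set S := range t \ {i, j}
  have hS : #S = t - 2 := by
    rw [card_sdiff_of_subset (by simp [insert_subset_iff, hi, hj]), card_range, card_pair hij]
  have hsplit : ∀ ω, {ω | #{l ∈ range t | X l ω ∈ B} = K ∧ X t ω ∈ B}.indicator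
      (fun ω => F (X i ω, X j ω)) ω = ∑ m ∈ range 3,
        {ω | #{l ∈ S | X l ω ∈ B} = K - m ∧ X t ω ∈ B}.indicator
          (fun ω => {z | pairCount B z = m}.indicator F (X i ω, X j ω)) ω := by
    intro ω
    have hpc := pairCount_le_two B (X i ω, X j ω)
    rw [sum_eq_single_of_mem (pairCount B (X i ω, X j ω)) (mem_range.mpr (by omega))]
    · have hiff : #{l ∈ range t | X l ω ∈ B} = K ↔
          #{l ∈ S | X l ω ∈ B} = K - pairCount B (X i ω, X j ω) := by
        rw [card_filter_eq_card_filter_sdiff_pair_add (X · ω ∈ B) hij (mem_range.mpr hi)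
          (mem_range.mpr hj)]
        exact (eq_tsub_iff_add_eq_of_le (hpc.trans hK)).symm
      simp only [Set.indicator_apply, Set.mem_ofPred_eq, if_true, hiff]
    · intro m _ hm
      simp [Set.indicator_apply, Ne.symm hm]
  have hpcm : ∀ m, MeasurableSet {z | pairCount B z = m} := measurableSet_pairCount_eq hB
  rw [integral_congr_ae (ae_of_all _ hsplit), integral_finsetSum _ fun m _ =>
    (integrable_comp_pair hXm hindep hlaw hij (hFi.indicator (hpcm m))).indicator
      (measurableSet_card_filter_eq_and_mem hXm hB S _ t)]
  refine sum_congr rfl fun m _ => ?_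
  rw [integral_indicator_card_filter_eq_and_mem_comp_pair hXm hindep hlaw hB hij hi.ne hj.ne
    (by simp [S]) (by simp [S]) (by simp [S]) (K - m) (hFm.indicator (hpcm m))
    (hFi.indicator (hpcm m)), hS]

theorem setIntegral_uStatistic [IsProbabilityMeasure μ] (hXm : ∀ i, Measurable (X i))
    (hindep : iIndepFun X P) (hlaw : ∀ i, P.map (X i) = μ) {B : Set E} (hB : MeasurableSet B)
    {F : E × E → ℝ} (hFm : Measurable F) (hFi : Integrable F (μ.prod μ)) {K : ℕ} (hK : 2 ≤ K)
    (t : ℕ) :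
    ∫ ω in {ω | #{l ∈ range t | X l ω ∈ B} = K ∧ X t ω ∈ B}, uStatistic F (X · ω) t ∂P
      = 𝔼 _p ∈ (range t).offDiag, ∑ m ∈ range 3,
          (∫ z, {z | pairCount B z = m}.indicator F z ∂μ.prod μ) *
            negBinomialMass (μ.real B) (K - m) (t - 2) := by
  set G := {ω | #{l ∈ range t | X l ω ∈ B} = K ∧ X t ω ∈ B}
  have hG : MeasurableSet G := measurableSet_card_filter_eq_and_mem hXm hB (range t) K t
  have hind : G.indicator (fun ω => uStatistic F (X · ω) t)
      = fun ω => 𝔼 p ∈ (range t).offDiag, G.indicator (fun ω => F (X p.1 ω, X p.2 ω)) ω := by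
    ext ω
    by_cases h : ω ∈ G <;> simp [h, uStatistic]
  rw [← integral_indicator hG, hind, integral_expect _ fun p hp =>
    (integrable_comp_pair hXm hindep hlaw (mem_offDiag.mp hp).2.2 hFi).indicator hG]
  refine expect_congr rfl fun p hp => ?_
  obtain ⟨hi, hj, hij⟩ := mem_offDiag.mp hp
  exact integral_indicator_card_filter_range_eq_and_mem_comp_pair hXm hindep hlaw hB hFm hFi hK
    hij (mem_range.mp hi) (mem_range.mp hj)

theorem hasSum_integral_uStatistic_drawsUntil [IsProbabilityMeasure μ]
    (hXm : ∀ i, Measurable (X i)) (hindep : iIndepFun X P) (hlaw : ∀ i, P.map (X i) = μ)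
    {B : Set E} (hB : MeasurableSet B) {F : E × E → ℝ} (hFm : Measurable F) {C : ℝ}
    (hFb : ∀ z, |F z| ≤ C) {N : ℕ} (hN : 3 ≤ N) :
    HasSum (fun t => 𝔼 _p ∈ (range t).offDiag, ∑ m ∈ range 3,
        (∫ z, {z | pairCount B z = m}.indicator F z ∂μ.prod μ) *
          negBinomialMass (μ.real B) (N - 1 - m) (t - 2))
      (∫ ω, uStatistic F (X · ω) (drawsUntil N B (X · ω) - 1) ∂P) := by
  have hT := measurable_drawsUntil hXm (by omega : 1 ≤ N) hB
  have hsum := hasSum_setIntegral_preimage_singleton hT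
    (g := fun t ω => uStatistic F (X · ω) (t - 1)) (integrable_uStatistic (P := P) hFm hFb hXm
      ((measurable_from_top (f := fun n : ℕ => n - 1)).comp hT))
  have hzero : ∫ ω in (fun ω => drawsUntil N B (X · ω)) ⁻¹' {0},
      uStatistic F (X · ω) (0 - 1) ∂P = 0 := by
    simp [uStatistic]
  have hFi : Integrable F (μ.prod μ) := .of_bound hFm.aestronglyMeasurable C
    (ae_of_all _ fun z => (Real.norm_eq_abs _).trans_le (hFb z))
  rw [← hasSum_nat_add_iff' 1, sum_range_one, hzero, sub_zero] at hsum
  simpa only [preimage_drawsUntil_succ (by omega : 1 ≤ N), Nat.add_sub_cancel,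
    setIntegral_uStatistic hXm hindep hlaw hB hFm hFi (by omega : 2 ≤ N - 1)] using hsum

end IID

theorem alive_U_statistic_unbiased_general
    {E : Type*} [MeasurableSpace E] {Ω : Type*} [MeasurableSpace Ω]
    (P : Measure Ω) [IsProbabilityMeasure P]
    (μ' : Measure E) [IsProbabilityMeasure μ']
    (X : ℕ → Ω → E) (hXm : ∀ i, Measurable (X i))
    (hindep : iIndepFun X P)
    (hlaw : ∀ i, Measure.map (X i) P = μ')
    (B : Set E) (hB : MeasurableSet B) (hB0 : 0 < μ' B)
    (N : ℕ) (hN : 3 ≤ N)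
    (T : Ω → ℕ)
    (hT : ∀ ω, T ω =
      sInf {n : ℕ | N ≤ ((Finset.range n).filter (fun i => X i ω ∈ B)).card})
    (F : E × E → ℝ) (hFm : Measurable F) (C : ℝ) (hFb : ∀ x, |F x| ≤ C) :
    ∫ ω, (1 / (((T ω : ℝ) - 1) * ((T ω : ℝ) - 2))) *
        ∑ i ∈ Finset.range (T ω - 1), ∑ j ∈ Finset.range (T ω - 1),
          (if i ≠ j then F (X i ω, X j ω) else 0) ∂P
      = ∫ x, ∫ y, F (x, y) ∂μ' ∂μ' := by
  obtain rfl : T = fun ω => drawsUntil N B (X · ω) := funext hT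
  have hq : |1 - μ'.real B| < 1 := by
    have hpos : 0 < μ'.real B := ENNReal.toReal_pos hB0.ne' (measure_ne_top _ _)
    rw [abs_lt]
    constructor <;> linarith [measureReal_le_one (μ := μ') (s := B)]
  have hFi : Integrable F (μ'.prod μ') := .of_bound hFm.aestronglyMeasurable C
    (ae_of_all _ fun z => (Real.norm_eq_abs _).trans_le (hFb z))
  have hlim := hasSum_expect_offDiag_range
    (hasSum_sum fun m (_ : m ∈ range 3) => (hasSum_negBinomialMass hq (N - 1 - m)).mul_left
      (∫ z, {z | pairCount B z = m}.indicator F z ∂μ'.prod μ'))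
  rw [integral_congr_ae (ae_of_all _ fun ω => one_div_mul_sum_sum_ite_eq_uStatistic F (X · ω) _),
    (hasSum_integral_uStatistic_drawsUntil hXm hindep hlaw hB hFm hFb hN).unique hlim]
  simp only [mul_one]
  rw [sum_integral_indicator_pairCount_eq hB hFi, integral_prod F hFi]

/-- Let `X 0, X 1, ...` be the samples of the alive sampler targeting a
probability measure `μ'` (i.e. i.i.d. with law `μ'`), `B` with `q = μ'(B) ∈ (0,1)`,
`N ≥ 3`, `T` the first time `N` samples land in `B` (so that, conditional on `T = t`,
exactly `N-1` of the first `t-1` samples lie in `B` and `t-N` lie in `Bᶜ`, with the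
conditional i.i.d. structure of the alive sampler).  Then the U-statistic
`η(F) = (1/((T-1)(T-2))) Σ_{i≠j, i,j < T-1} F(X i, X j)` satisfies
`E[η(F)] = ∫∫ F(x,y) μ'(dx) μ'(dy)` for bounded measurable `F`. -/
theorem alive_U_statistic_unbiased
    {E : Type*} [MeasurableSpace E] {Ω : Type*} [MeasurableSpace Ω]
    (P : Measure Ω) [IsProbabilityMeasure P]
    (μ' : Measure E) [IsProbabilityMeasure μ']
    (X : ℕ → Ω → E) (hXm : ∀ i, Measurable (X i))
    (hindep : iIndepFun X P)
    (hlaw : ∀ i, Measure.map (X i) P = μ')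
    (B : Set E) (hB : MeasurableSet B) (hB0 : 0 < μ' B) (hB1 : μ' B < 1)
    (N : ℕ) (hN : 3 ≤ N)
    (T : Ω → ℕ)
    (hT : ∀ ω, T ω =
      sInf {n : ℕ | N ≤ ((Finset.range n).filter (fun i => X i ω ∈ B)).card})
    (F : E × E → ℝ) (hFm : Measurable F) (C : ℝ) (hFb : ∀ x, |F x| ≤ C) :
    ∫ ω, (1 / (((T ω : ℝ) - 1) * ((T ω : ℝ) - 2))) *
        ∑ i ∈ Finset.range (T ω - 1), ∑ j ∈ Finset.range (T ω - 1),
          (if i ≠ j then F (X i ω, X j ω) else 0) ∂P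
      = ∫ x, ∫ y, F (x, y) ∂μ' ∂μ' :=
  alive_U_statistic_unbiased_general P μ' X hXm hindep hlaw B hB hB0 N hN T hT F hFm C hFb
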